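/- Let X ⊆ ℝⁿ be a nonempty closed convex set, let W : ℝⁿ → ℝ be convex and continuously differentiable with L-Lipschitz gradient on X (L > 0). For y ∈ X and s > 0 define p(y) = P_X[y − s∇W(y)], the projection of the gradient step onto X. Then for every θ ∈ [0,1], choosing s = 2/(Lθ + 2), the point ŷ = y + θ(p(y) − y) lies in X and satisfies W(ŷ) − W(y) ≤ −θ‖p(y) − y‖². -/

import Mathlib

/-!
The projection inequality tested at `z = y` gives `s ⟪∇W(y), p - y⟫ ≤ -‖p - y‖²`. The descent
lemma along the segment `[y, ŷ] ⊆ X` bounds `W(ŷ) - W(y)` by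
`θ ⟪∇W(y), p - y⟫ + (L θ² / 2) ‖p - y‖²`, and with `1 / s = (L θ + 2) / 2` this is exactly
`-θ ‖p - y‖²`.
-/

open Set

section DescentLemma

variable {E : Type*} [NormedAddCommGroup E] [InnerProductSpace ℝ E] [CompleteSpace E]

theorem HasGradientAt.hasDerivAt_comp_add_smul {W : E → ℝ} {g x d : E} {t : ℝ}
    (h : HasGradientAt W g (x + t • d)) :
    HasDerivAt (fun t : ℝ => W (x + t • d)) (inner ℝ g d) t := by
  have hline : HasDerivAt (fun t : ℝ => x + t • d) d t := by
    simpa using ((hasDerivAt_id t).smul_const d).const_add x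
  exact h.hasFDerivAt.comp_hasDerivAt t hline

theorem Convex.le_add_inner_add_of_lipschitz_gradient {X : Set E} (hX : Convex ℝ X)
    {W : E → ℝ} {g : E → E} (hgrad : ∀ x ∈ X, HasGradientAt W (g x) x) {L : ℝ}
    (hLip : ∀ y ∈ X, ∀ y' ∈ X, ‖g y - g y'‖ ≤ L * ‖y - y'‖) {x z : E} (hx : x ∈ X)
    (hz : z ∈ X) :
    W z ≤ W x + inner ℝ (g x) (z - x) + L / 2 * ‖z - x‖ ^ 2 := by
  set d := z - x
  have hseg : ∀ t ∈ Icc (0 : ℝ) 1, x + t • d ∈ X := fun t ht => hX.add_smul_sub_mem hx hz ht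
  have hderiv : ∀ t ∈ Icc (0 : ℝ) 1, HasDerivAt
      (fun t : ℝ => W (x + t • d) - t * inner ℝ (g x) d - L / 2 * t ^ 2 * ‖d‖ ^ 2)
      (inner ℝ (g (x + t • d)) d - inner ℝ (g x) d - L * t * ‖d‖ ^ 2) t := by
    intro t ht
    have hquad : HasDerivAt (fun t : ℝ => L / 2 * t ^ 2 * ‖d‖ ^ 2) (L * t * ‖d‖ ^ 2) t :=
      (((hasDerivAt_pow 2 t).const_mul (L / 2)).mul_const (‖d‖ ^ 2)).congr_deriv
        (by push_cast; ring)
    exact (((hgrad _ (hseg t ht)).hasDerivAt_comp_add_smul.sub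
      ((hasDerivAt_id t).mul_const _)).sub hquad).congr_deriv (by simp)
  have hanti := antitoneOn_of_hasDerivWithinAt_nonpos (convex_Icc 0 1)
    (fun t ht => (hderiv t ht).continuousAt.continuousWithinAt)
    (fun t ht => (hderiv t (interior_subset ht)).hasDerivWithinAt) (by
      intro t ht
      rw [interior_Icc] at ht
      have hlip : ‖g (x + t • d) - g x‖ ≤ L * (t * ‖d‖) := by
        simpa [norm_smul, abs_of_pos ht.1] using hLip _ (hseg t (Ioo_subset_Icc_self ht)) _ hx
      calc inner ℝ (g (x + t • d)) d - inner ℝ (g x) d - L * t * ‖d‖ ^ 2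
          = inner ℝ (g (x + t • d) - g x) d - L * t * ‖d‖ ^ 2 := by rw [inner_sub_left]
        _ ≤ ‖g (x + t • d) - g x‖ * ‖d‖ - L * t * ‖d‖ ^ 2 := by
          gcongr; exact real_inner_le_norm _ _
        _ ≤ 0 := by nlinarith [mul_le_mul_of_nonneg_right hlip (norm_nonneg d)])
    (left_mem_Icc.2 zero_le_one) (right_mem_Icc.2 zero_le_one) zero_le_one
  simp only [zero_smul, add_zero, zero_mul, sub_zero, one_smul, one_mul, one_pow, mul_one,
    add_sub_cancel, d] at hanti
  linarith

end DescentLemma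

theorem mul_inner_le_neg_norm_sq_of_projection {E : Type*} [NormedAddCommGroup E]
    [InnerProductSpace ℝ E] {y p v : E} {s : ℝ} (hproj : inner ℝ (y - p) ((y - s • v) - p) ≤ 0) :
    s * inner ℝ v (p - y) ≤ -‖p - y‖ ^ 2 := by
  have hsplit : (y - s • v) - p = -(p - y) - s • v := by module
  rw [hsplit, show y - p = -(p - y) by module, inner_sub_right, inner_neg_neg,
    real_inner_self_eq_norm_sq, inner_neg_left, real_inner_smul_right, real_inner_comm] at hproj
  linarith

theorem stmt0_general {n : ℕ} (X : Set (EuclideanSpace ℝ (Fin n)))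
    (hXconv : Convex ℝ X)
    (W : EuclideanSpace ℝ (Fin n) → ℝ)
    (g : EuclideanSpace ℝ (Fin n) → EuclideanSpace ℝ (Fin n))
    (hgrad : ∀ x, HasGradientAt W (g x) x)
    (L : ℝ) (hL : 0 < L)
    (hLip : ∀ y ∈ X, ∀ y' ∈ X, ‖g y - g y'‖ ≤ L * ‖y - y'‖)
    (y : EuclideanSpace ℝ (Fin n)) (hy : y ∈ X)
    (θ : ℝ) (hθ : θ ∈ Icc (0:ℝ) 1)
    (s : ℝ) (hs : s = 2 / (L * θ + 2))
    (p : EuclideanSpace ℝ (Fin n)) (hpX : p ∈ X)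
    (hproj : ∀ z ∈ X, (inner ℝ (z - p) ((y - s • g y) - p) : ℝ) ≤ 0) :
    y + θ • (p - y) ∈ X ∧ W (y + θ • (p - y)) - W y ≤ -θ * ‖p - y‖ ^ 2 := by
  have hmem : y + θ • (p - y) ∈ X := hXconv.add_smul_sub_mem hy hpX hθ
  refine ⟨hmem, ?_⟩
  have hdescent := hXconv.le_add_inner_add_of_lipschitz_gradient (fun x _ => hgrad x) hLip hy hmem
  rw [add_sub_cancel_left, real_inner_smul_right, norm_smul, Real.norm_eq_abs,
    abs_of_nonneg hθ.1] at hdescent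
  have hstep := mul_inner_le_neg_norm_sq_of_projection (hproj y hy)
  rw [hs, div_mul_eq_mul_div, div_le_iff₀ (by nlinarith [hθ.1])] at hstep
  nlinarith [mul_le_mul_of_nonneg_left hstep hθ.1]

/-- projected gradient step with step size `s = 2/(Lθ+2)` gives a point
`ŷ = y + θ (p(y) - y)` in `X` with `W(ŷ) - W(y) ≤ -θ ‖p(y) - y‖²`. The projection
`p` of `y - s • ∇W(y)` onto the nonempty closed convex set `X` is characterized by
the variational inequality from the Projection Theorem. -/
theorem stmt0 {n : ℕ} (X : Set (EuclideanSpace ℝ (Fin n)))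
    (hXne : X.Nonempty) (hXcl : IsClosed X) (hXconv : Convex ℝ X)
    (W : EuclideanSpace ℝ (Fin n) → ℝ)
    (g : EuclideanSpace ℝ (Fin n) → EuclideanSpace ℝ (Fin n))
    (hWconv : ConvexOn ℝ univ W)
    (hgrad : ∀ x, HasGradientAt W (g x) x)
    (L : ℝ) (hL : 0 < L)
    (hLip : ∀ y ∈ X, ∀ y' ∈ X, ‖g y - g y'‖ ≤ L * ‖y - y'‖)
    (y : EuclideanSpace ℝ (Fin n)) (hy : y ∈ X)
    (θ : ℝ) (hθ : θ ∈ Icc (0:ℝ) 1)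
    (s : ℝ) (hs : s = 2 / (L * θ + 2))
    (p : EuclideanSpace ℝ (Fin n)) (hpX : p ∈ X)
    (hproj : ∀ z ∈ X, (inner ℝ (z - p) ((y - s • g y) - p) : ℝ) ≤ 0) :
    y + θ • (p - y) ∈ X ∧ W (y + θ • (p - y)) - W y ≤ -θ * ‖p - y‖ ^ 2 :=
  stmt0_general X hXconv W g hgrad L hL hLip y hy θ hθ s hs p hpX hproj
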